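/- arXiv:1607.01118 — 6 statements merged into one kernel-verified Lean document; each statement's English description precedes it below -/
import Mathlib

section
/- Let R be a commutative ring, let A be an Azumaya R-algebra, and let M be an A-bimodule. Then the Hochschild cohomology groups HH^s(A, M) vanish for all s > 0. Equivalently, A is a projective module over its enveloping algebra A ⊗_R A^op. -/
open TensorProduct MulOpposite

/-- Right multiplication as an algebra map from the opposite algebra to endomorphisms. -/
noncomputable def mulRightHom (R A : Type*) [CommRing R] [Ring A] [Algebra R A] :
    Aᵐᵒᵖ →ₐ[R] Module.End R A where
  toFun b := LinearMap.mulRight R b.unop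
  map_one' := by ext x; simp
  map_mul' a b := by ext x; simp [mul_assoc]
  map_zero' := by ext x; simp
  map_add' a b := by ext x; simp [mul_add]
  commutes' r := by
    ext x
    simp [Algebra.commutes, Algebra.smul_def, Module.algebraMap_end_apply]

/-- The canonical "left-and-right multiplication" algebra map
`A ⊗[R] Aᵐᵒᵖ →ₐ[R] End_R(A)`. -/
noncomputable def AzumayaHom (R A : Type*) [CommRing R] [Ring A] [Algebra R A] :
    (A ⊗[R] Aᵐᵒᵖ) →ₐ[R] Module.End R A :=
  Algebra.TensorProduct.lift (Algebra.lmul R A) (mulRightHom R A)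
    (fun a b => LinearMap.ext fun x => by
      simp [mulRightHom, mul_assoc])

/-- `A` is an Azumaya algebra over the commutative ring `R`: it is a finitely
generated projective faithful `R`-module and the left-and-right multiplication
map `A ⊗[R] Aᵐᵒᵖ → End_R(A)` is bijective. -/
def IsAzumayaAlgebra (R A : Type*) [CommRing R] [Ring A] [Algebra R A] : Prop :=
  Module.Finite R A ∧ Module.Projective R A ∧ FaithfulSMul R A ∧
    Function.Bijective (AzumayaHom R A)

/-- `A` as a module over its enveloping algebra `A ⊗[R] Aᵐᵒᵖ`, via the
left-and-right multiplication map. -/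
noncomputable instance envModule (R A : Type*) [CommRing R] [Ring A] [Algebra R A] :
    Module (A ⊗[R] Aᵐᵒᵖ) A :=
  Module.compHom A (AzumayaHom R A).toRingHom


section Aux
variable (R A : Type*) [CommRing R] [Ring A] [Algebra R A]

/-- The "trace ideal"-like ideal of values `μ 1` for functionals `μ : A →ₗ[R] R`. -/
def unitIdeal : Ideal R where
  carrier := {r | ∃ μ : A →ₗ[R] R, μ 1 = r}
  zero_mem' := ⟨0, rfl⟩
  add_mem' := by rintro a b ⟨μ, rfl⟩ ⟨ν, rfl⟩; exact ⟨μ + ν, rfl⟩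
  smul_mem' := by rintro c a ⟨μ, rfl⟩; exact ⟨c • μ, rfl⟩

theorem exists_unit_functional [Module.Finite R A] [Module.Projective R A] [FaithfulSMul R A] :
    ∃ μ : A →ₗ[R] R, μ 1 = 1 := by
  obtain ⟨s, hs⟩ := Module.projective_def'.mp ‹Module.Projective R A›
  have hle : (⊤ : Submodule R A) ≤ (unitIdeal R A) • ⊤ := by
    intro x _
    have hx : Finsupp.linearCombination R id (s x) = x := by
      have := congrArg (fun f => f x) hs; simpa using this
    rw [← hx, Finsupp.linearCombination_apply, Finsupp.sum]
    refine Submodule.sum_mem _ fun a _ => ?_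
    refine Submodule.smul_mem_smul ?_ trivial
    exact ⟨(Finsupp.lapply a).comp (s.comp (LinearMap.mulRight R x)), by simp⟩
  obtain ⟨r, hr1, hr0⟩ := Submodule.exists_sub_one_mem_and_smul_eq_zero_of_fg_of_le_smul
    (unitIdeal R A) ⊤ (Module.finite_def.mp ‹_›) hle
  have hr : r = 0 := by
    refine eq_of_smul_eq_smul (M := R) (α := A) fun a => ?_
    rw [hr0 a trivial, zero_smul]
  rw [hr, zero_sub] at hr1
  have h1 : (1 : R) ∈ unitIdeal R A := by
    simpa using (unitIdeal R A).neg_mem hr1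
  exact h1

theorem projective_env (hAz : IsAzumayaAlgebra R A) :
    Module.Projective (A ⊗[R] Aᵐᵒᵖ) A := by
  obtain ⟨hfin, hproj, hfaith, hbij⟩ := hAz
  obtain ⟨μ, hμ⟩ := exists_unit_functional R A
  let eqv : (A ⊗[R] Aᵐᵒᵖ) ≃ₐ[R] Module.End R A := AlgEquiv.ofBijective _ hbij
  have hsmul : ∀ (e : A ⊗[R] Aᵐᵒᵖ) (a : A), e • a = AzumayaHom R A e a := fun _ _ => rfl
  -- T a = (x ↦ μ x • a)
  let T : A →ₗ[R] Module.End R A :=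
    { toFun := fun a => μ.smulRight a
      map_add' := fun a b => by ext x; simp
      map_smul' := fun c a => by
        ext x
        simp only [LinearMap.smulRight_apply, LinearMap.smul_apply, RingHom.id_apply]
        rw [smul_comm] }
  have hT : ∀ (g : Module.End R A) (a : A), T (g a) = g * T a := by
    intro g a; ext x
    simp [T, Module.End.mul_apply, map_smul]
  let i : A →ₗ[A ⊗[R] Aᵐᵒᵖ] (A ⊗[R] Aᵐᵒᵖ) :=
    { toFun := fun a => eqv.symm (T a)
      map_add' := fun a b => by simp
      map_smul' := fun e a => by
        show eqv.symm (T (e • a)) = e * eqv.symm (T a)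
        rw [hsmul]
        have : AzumayaHom R A e = eqv e := rfl
        rw [this, hT, map_mul, AlgEquiv.symm_apply_apply] }
  let p : (A ⊗[R] Aᵐᵒᵖ) →ₗ[A ⊗[R] Aᵐᵒᵖ] A :=
    { toFun := fun e => e • (1 : A)
      map_add' := fun e f => add_smul e f 1
      map_smul' := fun e f => mul_smul e f 1 }
  refine Module.Projective.of_split i p ?_
  ext a
  show (eqv.symm (T a)) • (1 : A) = a
  rw [hsmul]
  have : AzumayaHom R A (eqv.symm (T a)) = eqv (eqv.symm (T a)) := rfl
  rw [this, AlgEquiv.apply_symm_apply]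
  show μ 1 • a = a
  rw [hμ, one_smul]

end Aux

open CategoryTheory CategoryTheory.Abelian in
/-- For an Azumaya algebra `A` over a commutative ring `R` and any `A`-bimodule `M`
(i.e. module over the enveloping algebra `A ⊗[R] Aᵐᵒᵖ`), the Hochschild cohomology
`HH^s(A, M) = Ext^s_{A ⊗ Aᵒᵖ}(A, M)` vanishes for `s > 0`; equivalently, `A` is
projective over its enveloping algebra. -/
theorem hochschild_vanishing (R A : Type) [CommRing R] [Ring A] [Algebra R A]
    (hAz : IsAzumayaAlgebra R A)
    (M : Type) [AddCommGroup M] [Module (A ⊗[R] Aᵐᵒᵖ) M] :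
    Module.Projective (A ⊗[R] Aᵐᵒᵖ) A ∧
      ∀ s : ℕ, 0 < s →
        Subsingleton (((Ext ℤ (ModuleCat (A ⊗[R] Aᵐᵒᵖ)) s).obj
          (Opposite.op (ModuleCat.of (A ⊗[R] Aᵐᵒᵖ) A))).obj
            (ModuleCat.of (A ⊗[R] Aᵐᵒᵖ) M)) := by
  have hproj := projective_env R A hAz
  refine ⟨hproj, fun s hs => ?_⟩
  obtain ⟨n, rfl⟩ := Nat.exists_eq_succ_of_ne_zero hs.ne'
  haveI : Projective (ModuleCat.of (A ⊗[R] Aᵐᵒᵖ) A) := (_root_.IsProjective.iff_projective A).mp hproj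
  have hz := isZero_Ext_succ_of_projective (R := ℤ) (C := ModuleCat (A ⊗[R] Aᵐᵒᵖ))
    (ModuleCat.of (A ⊗[R] Aᵐᵒᵖ) A) (ModuleCat.of (A ⊗[R] Aᵐᵒᵖ) M) n
  rw [CategoryTheory.Limits.IsZero.iff_id_eq_zero] at hz
  refine ⟨fun a b => ?_⟩
  have ha := congrArg (fun f => f a) hz
  have hb := congrArg (fun f => f b) hz
  simpa using ha.trans hb.symm
end

section
/- Let R be a commutative ring, A an Azumaya R-algebra, and M an A-bimodule. Then every R-linear derivation d : A → M is inner: there exists m ∈ M with d(a) = a·m − m·a for all a ∈ A. Equivalently, the sequence 0 → HH^0(A,M) → M → Der_R(A,M) → 0 is exact. -/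
open TensorProduct MulOpposite

/-- `A` is an Azumaya algebra over the commutative ring `R`: it is a finitely
generated projective faithful `R`-module and the left-and-right multiplication
map `A ⊗[R] Aᵐᵒᵖ → End_R(A)` is bijective. -/
def IsAzumaya' (R A : Type*) [CommRing R] [Ring A] [Algebra R A] : Prop :=
  Module.Finite R A ∧ Module.Projective R A ∧ FaithfulSMul R A ∧
    Function.Bijective (AzumayaHom R A)

/-- A finitely generated projective faithful module over a commutative ring admits a
linear functional hitting `1`. -/
theorem exists_functional_one (R A : Type*) [CommRing R] [Ring A] [Algebra R A]
    [Module.Finite R A] [Module.Projective R A] [FaithfulSMul R A] :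
    ∃ h : A →ₗ[R] R, h 1 = 1 := by
  obtain ⟨n, p, s, hsurj, hinj, hps⟩ := Module.Finite.exists_comp_eq_id_of_projective R A
  set f : Fin n → (A →ₗ[R] R) := fun i => (LinearMap.proj i).comp s with hf
  set x : Fin n → A := fun i => p (fun j => if i = j then (1:R) else 0) with hx
  have hdual : ∀ a : A, ∑ i, f i a • x i = a := by
    intro a
    have h1 : p (s a) = a := congrFun (congrArg DFunLike.coe hps) a
    conv_rhs => rw [← h1, pi_eq_sum_univ (s a)]
    rw [map_sum]
    simp [hf, hx]
  set T : Ideal R := Ideal.span (Set.range fun q : Fin n × Fin n => f q.1 (x q.2)) with hT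
  have hmemT : ∀ i j, f i (x j) ∈ T := fun i j =>
    Ideal.subset_span ⟨(i, j), rfl⟩
  have hfa : ∀ (i) (a : A), f i a ∈ T := by
    intro i a
    have : f i a = ∑ j, f j a * f i (x j) := by
      conv_lhs => rw [← hdual a]
      simp [mul_comm]
    rw [this]
    exact Ideal.sum_mem _ fun j _ => Ideal.mul_mem_left _ _ (hmemT i j)
  have hle : T ≤ T • T := by
    rw [hT, Ideal.span_le]
    rintro _ ⟨⟨i, j⟩, rfl⟩
    show f i (x j) ∈ _
    have : f i (x j) = ∑ k, f k (x j) * f i (x k) := by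
      conv_lhs => rw [← hdual (x j)]
      simp [mul_comm]
    rw [this]
    exact Submodule.sum_mem _ fun k _ =>
      Submodule.smul_mem_smul (hmemT k j) (hmemT i k)
  obtain ⟨r, hr1, hr0⟩ := Submodule.exists_sub_one_mem_and_smul_eq_zero_of_fg_of_le_smul T T
    (Submodule.fg_span (Set.finite_range _)) hle
  have hrzero : r = 0 := by
    have hra : ∀ a : A, r • a = (0:R) • a := by
      intro a
      rw [zero_smul]
      calc r • a = r • ∑ i, f i a • x i := by rw [hdual]
        _ = ∑ i, r • (f i a • x i) := Finset.smul_sum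
        _ = 0 := Finset.sum_eq_zero fun i _ => by
              rw [← smul_assoc, hr0 _ (hfa i a), zero_smul]
    exact eq_of_smul_eq_smul hra
  have hone : (1:R) ∈ T := by
    have := T.neg_mem hr1
    simpa [hrzero] using this
  have hUle : T ≤ LinearMap.range (LinearMap.applyₗ (1:A) :
      (A →ₗ[R] R) →ₗ[R] R) := by
    rw [hT, Ideal.span_le]
    rintro _ ⟨⟨i, j⟩, rfl⟩
    exact ⟨(f i).comp (LinearMap.mulRight R (x j)), by simp⟩
  obtain ⟨h, hh⟩ := hUle hone
  exact ⟨h, by simpa using hh⟩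

/-- Every `R`-linear derivation from an Azumaya `R`-algebra `A` to an `A`-bimodule `M`
(with central `R`-action) is inner: `d a = a • m - (op a) • m` for some `m ∈ M`.
Equivalently, `0 → HH^0(A,M) → M → Der_R(A,M) → 0` is exact. -/
theorem derivation_is_inner (R A M : Type*) [CommRing R] [Ring A] [Algebra R A]
    [AddCommGroup M] [Module R M] [Module A M] [Module Aᵐᵒᵖ M]
    [SMulCommClass A Aᵐᵒᵖ M] [IsScalarTower R A M] [IsScalarTower R Aᵐᵒᵖ M]
    (hAz : IsAzumaya' R A)
    (d : A →ₗ[R] M)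
    (hLeibniz : ∀ a b : A, d (a * b) = a • d b + (op b) • d a) :
    ∃ m : M, ∀ a : A, d a = a • m - (op a) • m := by
  obtain ⟨hfin, hproj, hfaith, hbij⟩ := hAz
  haveI := hfin; haveI := hproj; haveI := hfaith
  obtain ⟨h, h1⟩ := exists_functional_one R A
  -- the endomorphism x ↦ h x • 1, with central values
  set f : Module.End R A := h.smulRight (1 : A) with hfdef
  set φ : (A ⊗[R] Aᵐᵒᵖ) ≃ₐ[R] Module.End R A := AlgEquiv.ofBijective (AzumayaHom R A) hbij
    with hφdef
  set e : A ⊗[R] Aᵐᵒᵖ := φ.symm f with hedef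
  have hφe : AzumayaHom R A e = f := φ.apply_symm_apply f
  have hφtmul : ∀ (a : A) (b : Aᵐᵒᵖ),
      AzumayaHom R A (a ⊗ₜ[R] b) = (Algebra.lmul R A a) * (LinearMap.mulRight R b.unop) := by
    intro a b
    simp [AzumayaHom, Algebra.TensorProduct.lift_tmul, mulRightHom]
  -- the key separability identity
  have key : ∀ a : A, ((a ⊗ₜ[R] (1 : Aᵐᵒᵖ)) * e) = (((1:A) ⊗ₜ[R] op a) * e) := by
    intro a
    apply hbij.1
    rw [map_mul, map_mul, hφe, hφtmul, hφtmul]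
    ext x
    simp [hfdef, Module.End.mul_apply, mul_smul_comm, smul_mul_assoc]
  have hmue : (AzumayaHom R A e) 1 = 1 := by
    rw [hφe]; simp [hfdef, h1]
  -- the linear map Ψ : A ⊗ Aᵐᵒᵖ → M, x ⊗ op y ↦ x • d y
  set Ψ : A ⊗[R] Aᵐᵒᵖ →ₗ[R] M := TensorProduct.lift
    { toFun := fun xa =>
        { toFun := fun b => xa • d b.unop
          map_add' := by intro b c; simp [add_smul, smul_add]
          map_smul' := by intro r b; simp [smul_comm r xa] }
      map_add' := by intro xa ya; ext b; simp [add_smul]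
      map_smul' := by intro r xa; ext b; simp [smul_assoc] } with hΨdef
  have hΨtmul : ∀ (xa : A) (b : Aᵐᵒᵖ), Ψ (xa ⊗ₜ[R] b) = xa • d b.unop := by
    intro xa b; simp [hΨdef]
  have L1 : ∀ (a : A) (t : A ⊗[R] Aᵐᵒᵖ), Ψ ((a ⊗ₜ[R] (1:Aᵐᵒᵖ)) * t) = a • Ψ t := by
    intro a t
    induction t using TensorProduct.induction_on with
    | zero => simp
    | tmul xa b =>
        rw [Algebra.TensorProduct.tmul_mul_tmul, hΨtmul, hΨtmul, one_mul, mul_smul]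
    | add u v hu hv => rw [mul_add, map_add, hu, hv, map_add, smul_add]
  have L2 : ∀ (a : A) (t : A ⊗[R] Aᵐᵒᵖ),
      Ψ (((1:A) ⊗ₜ[R] op a) * t) = ((AzumayaHom R A t) 1) • d a + op a • Ψ t := by
    intro a t
    induction t using TensorProduct.induction_on with
    | zero => simp
    | tmul xa b =>
        rw [Algebra.TensorProduct.tmul_mul_tmul, hΨtmul, hΨtmul, one_mul, hφtmul]
        have : (op a * b).unop = b.unop * a := rfl
        rw [this, hLeibniz b.unop a, smul_add, ← mul_smul, smul_comm xa (op a)]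
        simp [Module.End.mul_apply]
    | add u v hu hv =>
        rw [mul_add, map_add, hu, hv, map_add, map_add]
        simp only [LinearMap.add_apply, add_smul, smul_add]
        abel
  refine ⟨Ψ e, fun a => ?_⟩
  have := (L1 a e).symm.trans (by rw [key a, L2 a e, hmue, one_smul])
  rw [eq_sub_iff_add_eq, ← this]
end

section
/- Let R be a commutative ring and let P be a finitely generated projective R-module which is a generator of the category of R-modules. Then End_R(P) is an Azumaya R-algebra, i.e. End_R(P) is a finitely generated projective faithful R-module and the natural map End_R(P) ⊗_R End_R(P)^op → End_R(End_R(P)) is an isomorphism. -/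
open TensorProduct MulOpposite

universe u v

section aux
variable {R P : Type*} [CommRing R] [AddCommGroup P] [Module R P]

lemma E_mul_E (p q : P) (g h : P →ₗ[R] R) :
    (LinearMap.smulRight g p : Module.End R P) * LinearMap.smulRight h q
      = g q • LinearMap.smulRight h p := by
  ext y
  simp [Module.End.mul_apply, smul_smul, mul_comm]

lemma mul_E (a : Module.End R P) (g : P →ₗ[R] R) (p : P) :
    a * LinearMap.smulRight g p = LinearMap.smulRight g (a p) := by
  ext y; simp [Module.End.mul_apply]

lemma E_mul (a : Module.End R P) (g : P →ₗ[R] R) (p : P) :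
    (LinearMap.smulRight g p : Module.End R P) * a = LinearMap.smulRight (g ∘ₗ a) p := by
  ext y; simp [Module.End.mul_apply]

lemma azumayaHom_tmul_apply (a c : Module.End R P) (b : (Module.End R P)ᵐᵒᵖ) :
    AzumayaHom R (Module.End R P) (a ⊗ₜ[R] b) c = a * c * b.unop := by
  simp [AzumayaHom, mulRightHom, Algebra.TensorProduct.lift_tmul, Module.End.mul_apply, mul_assoc]

end aux

/-- If `P` is a finitely generated projective generator of the category of
`R`-modules (every `R`-module is a quotient of a direct sum of copies of `P`),
then `End_R(P)` is an Azumaya `R`-algebra. -/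
theorem end_isAzumaya (R : Type u) (P : Type u) [CommRing R] [AddCommGroup P] [Module R P]
    [Module.Finite R P] [Module.Projective R P]
    (hgen : ∀ (M : Type u) [AddCommGroup M] [Module R M],
      ∃ (ι : Type u) (f : (ι →₀ P) →ₗ[R] M), Function.Surjective f) :
    IsAzumaya' R (Module.End R P) := by
  classical
  obtain ⟨n, π, hπ⟩ := Module.Finite.exists_fin' R P
  obtain ⟨s, hs⟩ := Module.projective_lifting_property π LinearMap.id hπ
  have hsy : ∀ p : P, π (s p) = p := fun p => by
    have := LinearMap.congr_fun hs p; simpa using this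
  set x : Fin n → P := fun i => π (Pi.single i 1) with hxdef
  set f : Fin n → (P →ₗ[R] R) := fun i => LinearMap.proj i ∘ₗ s with hfdef
  -- the dual basis identity
  have hd : ∀ p : P, ∑ i, f i p • x i = p := by
    intro p
    have h1 : ∑ i, f i p • x i = π (∑ i, Pi.single i (s p i)) := by
      rw [map_sum]
      refine Finset.sum_congr rfl fun i _ => ?_
      rw [hxdef, hfdef, ← map_smul]
      congr 1
      ext j
      simp [Pi.single_apply, mul_comm]
    rw [h1, Finset.univ_sum_single, hsy]
  -- the sum of E (x i) (f i) is the identity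
  have hone : (∑ i, LinearMap.smulRight (f i) (x i)) = (1 : Module.End R P) := by
    ext y
    simpa using hd y
  -- spanning identity, single
  have hspan : ∀ a : Module.End R P, ∑ i, LinearMap.smulRight (f i) (a (x i)) = a := by
    intro a
    ext y
    simp only [LinearMap.sum_apply, LinearMap.smulRight_apply, Module.End.one_apply,
      ← map_smul, ← map_sum, hd]
  -- spanning identity, double
  have hspan2 : ∀ b : Module.End R P,
      ∑ k, ∑ l, f k (b (x l)) • LinearMap.smulRight (f l) (x k) = b := by
    intro b
    ext y
    simp only [LinearMap.sum_apply, LinearMap.smul_apply, LinearMap.smulRight_apply]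
    calc ∑ k, ∑ l, f k (b (x l)) • (f l y • x k)
        = ∑ l, f l y • ∑ k, f k (b (x l)) • x k := by
          rw [Finset.sum_comm]
          refine Finset.sum_congr rfl fun l _ => ?_
          rw [Finset.smul_sum]
          exact Finset.sum_congr rfl fun k _ => smul_comm _ _ _
      _ = ∑ l, f l y • b (x l) := by
          exact Finset.sum_congr rfl fun l _ => by rw [hd]
      _ = b y := by
          simp only [← map_smul, ← map_sum, hd]
  -- the inverse candidate
  set Ψ : Module.End R (Module.End R P) →
      Module.End R P ⊗[R] (Module.End R P)ᵐᵒᵖ := fun F =>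
    ∑ j, ∑ k, ∑ l, (F (LinearMap.smulRight (f k) (x j)) * LinearMap.smulRight (f j) (x l))
      ⊗ₜ[R] op (LinearMap.smulRight (f l) (x k)) with hΨdef
  -- surjectivity
  have hsurj : Function.Surjective (AzumayaHom R (Module.End R P)) := by
    intro F
    refine ⟨Ψ F, ?_⟩
    refine LinearMap.ext fun c => ?_
    rw [hΨdef]
    simp only [map_sum, LinearMap.sum_apply]
    have hterm : ∀ j k l,
        AzumayaHom R (Module.End R P)
          ((F (LinearMap.smulRight (f k) (x j)) * LinearMap.smulRight (f j) (x l))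
            ⊗ₜ[R] op (LinearMap.smulRight (f l) (x k))) c
        = f j (c (x k)) • (F (LinearMap.smulRight (f k) (x j))
            * LinearMap.smulRight (f l) (x l)) := by
      intro j k l
      rw [azumayaHom_tmul_apply, unop_op,
        mul_assoc (F ((f k).smulRight (x j))) ((f j).smulRight (x l)) c,
        mul_assoc (F ((f k).smulRight (x j))), E_mul, E_mul_E, mul_smul_comm,
        LinearMap.comp_apply]
    simp only [hterm]
    calc ∑ j, ∑ k, ∑ l, f j (c (x k)) • (F (LinearMap.smulRight (f k) (x j))
          * LinearMap.smulRight (f l) (x l))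
        = ∑ j, ∑ k, f j (c (x k)) • F (LinearMap.smulRight (f k) (x j)) := by
          refine Finset.sum_congr rfl fun j _ => Finset.sum_congr rfl fun k _ => ?_
          rw [← Finset.smul_sum, ← Finset.mul_sum, hone, mul_one]
      _ = F c := by
          simp only [← map_smul, ← map_sum]
          rw [hspan2]
  -- left inverse property
  have hinvt : ∀ t : Module.End R P ⊗[R] (Module.End R P)ᵐᵒᵖ,
      Ψ (AzumayaHom R (Module.End R P) t) = t := by
    have hΨadd : ∀ F G, Ψ (F + G) = Ψ F + Ψ G := by
      intro F G
      rw [hΨdef]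
      simp only [LinearMap.add_apply, add_mul, add_tmul, Finset.sum_add_distrib]
    intro t
    induction t using TensorProduct.induction_on with
    | zero =>
        rw [map_zero, hΨdef]
        simp
    | tmul a b =>
        rw [hΨdef]
        have hterm : ∀ j k l,
            (AzumayaHom R (Module.End R P) (a ⊗ₜ[R] b)
                (LinearMap.smulRight (f k) (x j)) * LinearMap.smulRight (f j) (x l))
              ⊗ₜ[R] op (LinearMap.smulRight (f l) (x k))
            = LinearMap.smulRight (f j) (a (x j))
              ⊗ₜ[R] (f k (b.unop (x l)) • op (LinearMap.smulRight (f l) (x k))) := by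
          intro j k l
          rw [azumayaHom_tmul_apply,
            mul_assoc a ((f k).smulRight (x j)) (unop b), mul_assoc a, E_mul, E_mul_E,
            mul_smul_comm, mul_E, smul_tmul, LinearMap.comp_apply]
        simp only [hterm]
        have hop : ∑ k, ∑ l, f k (b.unop (x l)) • op (LinearMap.smulRight (f l) (x k))
            = op b.unop := by
          conv_rhs => rw [← hspan2 b.unop]
          simp [Finset.op_sum]
        calc ∑ j, ∑ k, ∑ l, LinearMap.smulRight (f j) (a (x j))
              ⊗ₜ[R] (f k (b.unop (x l)) • op (LinearMap.smulRight (f l) (x k)))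
            = ∑ j, LinearMap.smulRight (f j) (a (x j))
              ⊗ₜ[R] (∑ k, ∑ l, f k (b.unop (x l)) • op (LinearMap.smulRight (f l) (x k))) := by
              refine Finset.sum_congr rfl fun j _ => ?_
              simp only [tmul_sum]
          _ = a ⊗ₜ[R] b := by
              rw [hop, ← sum_tmul, hspan]
              simp
    | add t₁ t₂ ih₁ ih₂ =>
        rw [map_add, hΨadd, ih₁, ih₂]
  have hinj : Function.Injective (AzumayaHom R (Module.End R P)) := by
    intro t t' h
    rw [← hinvt t, ← hinvt t', h]
  -- finiteness and projectivity of End R P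
  let ι : Module.End R P →ₗ[R] Module.End R (Fin n → R) :=
    { toFun := fun a => s ∘ₗ a ∘ₗ π
      map_add' := fun a b => by ext y; simp
      map_smul' := fun r a => by ext y; simp }
  let ρ : Module.End R (Fin n → R) →ₗ[R] Module.End R P :=
    { toFun := fun g => π ∘ₗ g ∘ₗ s
      map_add' := fun a b => by ext y; simp
      map_smul' := fun r a => by ext y; simp }
  have hρι : ρ.comp ι = LinearMap.id := by
    ext a y
    simp [ι, ρ, hsy]
  have hfin : Module.Finite R (Module.End R P) :=
    Module.Finite.of_surjective ρ (fun a => ⟨ι a, LinearMap.congr_fun hρι a⟩)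
  have hproj : Module.Projective R (Module.End R P) :=
    Module.Projective.of_split ι ρ hρι
  -- faithfulness
  have hfaith : FaithfulSMul R (Module.End R P) := by
    refine ⟨fun {r r'} h => ?_⟩
    have hP : ∀ p : P, r • p = r' • p := by
      intro p
      have := LinearMap.congr_fun (h 1) p
      simpa using this
    obtain ⟨ι', g, hg⟩ := hgen R
    obtain ⟨v, hv⟩ := hg 1
    have hvv : r • v = r' • v := by
      ext a
      simp [hP]
    have : r • (1 : R) = r' • (1 : R) := by
      rw [← hv, ← map_smul, ← map_smul, hvv]
    simpa using this
  exact ⟨hfin, hproj, hfaith, hinj, hsurj⟩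
end

section
/- Let R be a commutative ring and A an Azumaya R-algebra. Then there is an exact sequence of groups 1 → R^× → A^× → Aut_{R-alg}(A) → Pic(R), where R^× → A^× is induced by the unit map, A^× → Aut_{R-alg}(A) sends a unit u to conjugation x ↦ u x u^{-1}, and the last map sends an R-algebra automorphism σ to the class of the invertible R-module consisting of elements a ∈ A with x·a = a·σ(x) for all x ∈ A (a rank-one projective R-module). -/
open TensorProduct MulOpposite

/-- `A` is an Azumaya algebra over the commutative ring `R`: it is a finitely
generated projective faithful `R`-module and the left-and-right multiplication
map `A ⊗[R] Aᵐᵒᵖ → End_R(A)` is bijective. -/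
def IsAzumayaAlg (R A : Type*) [CommRing R] [Ring A] [Algebra R A] : Prop :=
  Module.Finite R A ∧ Module.Projective R A ∧ FaithfulSMul R A ∧
    Function.Bijective (AzumayaHom R A)

/-- For an `R`-algebra automorphism `σ` of `A`, the `R`-submodule
`{a ∈ A | x·a = a·σ(x) for all x}`. -/
def rzModule (R A : Type*) [CommRing R] [Ring A] [Algebra R A] (σ : A ≃ₐ[R] A) :
    Submodule R A where
  carrier := {a : A | ∀ x : A, x * a = a * σ x}
  zero_mem' := by intro x; simp
  add_mem' := by
    intro a b ha hb x
    simp [mul_add, add_mul, ha x, hb x]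
  smul_mem' := by
    intro r a ha x
    simp only [Set.mem_setOf_eq] at ha ⊢
    rw [mul_smul_comm, smul_mul_assoc, ha x]



namespace RZaux

variable {R A : Type*} [CommRing R] [Ring A] [Algebra R A]

lemma azumayaHom_tmul (a : A) (b : Aᵐᵒᵖ) (x : A) :
    AzumayaHom R A (a ⊗ₜ[R] b) x = a * (x * b.unop) := by
  simp [AzumayaHom, mulRightHom, Algebra.TensorProduct.lift_tmul, Module.End.mul_apply]

lemma algebraMap_inj (hf : FaithfulSMul R A) :
    Function.Injective (algebraMap R A) := by
  intro r s h
  refine FaithfulSMul.eq_of_smul_eq_smul (M := R) (α := A) (fun a => ?_)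
  rw [Algebra.smul_def, Algebra.smul_def, h]

lemma mem_rz {σ : A ≃ₐ[R] A} {m : A} :
    m ∈ rzModule R A σ ↔ ∀ x : A, x * m = m * σ x := Iff.rfl

/-- finite dual basis for a f.g. projective module (here: the algebra `A`). -/
lemma exists_dualBasis (hF : Module.Finite R A) (hP : Module.Projective R A) :
    ∃ (n : ℕ) (a : Fin n → A) (g : Fin n → (A →ₗ[R] R)),
      ∀ x : A, ∑ i, g i x • a i = x := by
  obtain ⟨n, s, hs⟩ := Module.Finite.exists_fin (R := R) (M := A)
  let π : (Fin n → R) →ₗ[R] A :=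
    ∑ i : Fin n, (LinearMap.proj i : (Fin n → R) →ₗ[R] R).smulRight (s i)
  have hπ : ∀ v : Fin n → R, π v = ∑ i, v i • s i := by
    intro v; simp [π, LinearMap.sum_apply]
  have hsurj : Function.Surjective π := by
    intro x
    have hx : x ∈ Submodule.span R (Set.range s) := by rw [hs]; trivial
    have hle : Submodule.span R (Set.range s) ≤ LinearMap.range π := by
      rw [Submodule.span_le]
      rintro - ⟨j, rfl⟩
      exact ⟨Pi.single j 1, by simp [hπ, Pi.single_apply, ite_smul]⟩
    obtain ⟨v, hv⟩ := hle hx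
    exact ⟨v, hv⟩
  obtain ⟨sec, hsec⟩ := Module.projective_lifting_property π LinearMap.id hsurj
  refine ⟨n, s, fun i => (LinearMap.proj i).comp sec, fun x => ?_⟩
  have : π (sec x) = x := by
    rw [← LinearMap.comp_apply, hsec, LinearMap.id_apply]
  rw [hπ] at this
  simpa using this

/-- an element commuting with everything commutes with every `R`-linear
endomorphism of `A` (uses surjectivity of the Azumaya map). -/
lemma central_comm_end (hAz : IsAzumayaAlg R A) {z : A} (hz : ∀ x : A, z * x = x * z)
    (e : Module.End R A) (x : A) : z * e x = e (z * x) := by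
  obtain ⟨t, rfl⟩ := hAz.2.2.2.2 e
  induction t with
  | zero => simp
  | tmul a b =>
      simp only [azumayaHom_tmul, ← mul_assoc, hz a]
  | add t₁ t₂ h₁ h₂ => simp only [map_add, LinearMap.add_apply, mul_add, h₁, h₂]

/-- trace data: `1` is a finite sum of values of functionals. -/
lemma exists_trace_list (hAz : IsAzumayaAlg R A) :
    ∃ (k : ℕ) (a : Fin k → A) (g : Fin k → (A →ₗ[R] R)) (L : List (Fin k × A)),
      (∀ x : A, ∑ i, g i x • a i = x) ∧
      (L.map fun p => g p.1 p.2).sum = 1 := by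
  obtain ⟨k, a, g, hdb⟩ := exists_dualBasis hAz.1 hAz.2.1
  set S : Set R := Set.range fun p : Fin k × A => g p.1 p.2 with hS
  set τ : Ideal R := Submodule.span R S with hτ
  have hle : (⊤ : Submodule R A) ≤ τ • ⊤ := by
    intro x _hx
    rw [← hdb x]
    refine Submodule.sum_mem _ (fun i _ => ?_)
    exact Submodule.smul_mem_smul (Submodule.subset_span ⟨(i, x), rfl⟩) trivial
  obtain ⟨r, hr1, hr0⟩ :=
    Submodule.exists_sub_one_mem_and_smul_eq_zero_of_fg_of_le_smul τ ⊤
      hAz.1.fg_top hle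
  have hr : r = 0 := by
    apply algebraMap_inj hAz.2.2.1
    have := hr0 1 trivial
    rw [Algebra.algebraMap_eq_smul_one, this, map_zero]
  have h1 : (1 : R) ∈ τ := by
    have : -(r - 1) ∈ τ := Submodule.neg_mem _ hr1
    rwa [hr, zero_sub, neg_neg] at this
  -- extract a list representation
  refine ⟨k, a, g, ?_⟩
  have key : ∀ (y : R), y ∈ τ → ∃ L : List (Fin k × A),
      (L.map fun p => g p.1 p.2).sum = y := by
    intro y hy
    induction hy using Submodule.span_induction with
    | mem w hw =>
        obtain ⟨p, rfl⟩ := hw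
        exact ⟨[p], by simp⟩
    | zero => exact ⟨[], by simp⟩
    | add w₁ w₂ h₁ h₂ ih₁ ih₂ =>
        obtain ⟨L₁, hL₁⟩ := ih₁; obtain ⟨L₂, hL₂⟩ := ih₂
        exact ⟨L₁ ++ L₂, by simp [hL₁, hL₂]⟩
    | smul c w hw ih =>
        obtain ⟨L, hL⟩ := ih
        refine ⟨L.map fun p => (p.1, c • p.2), ?_⟩
        rw [List.map_map, ← hL, List.smul_sum, List.map_map]
        congr 1
        exact List.map_congr_left (fun p _ => by simp)
  obtain ⟨L, hL⟩ := key 1 h1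
  exact ⟨L, hdb, hL⟩

/-- helper: pull a sum of scalars out of a smul. -/
lemma list_sum_smul {α : Type*} (l : List α) (f : α → R) (v : A) :
    (l.map f).sum • v = (l.map fun w => f w • v).sum := by
  induction l with
  | nil => simp
  | cons h t ih => simp [add_smul, ih]

/-- the center of an Azumaya algebra is `R`. -/
lemma central_eq_algebraMap (hAz : IsAzumayaAlg R A) {z : A} (hz : ∀ x : A, z * x = x * z) :
    ∃ r : R, algebraMap R A r = z := by
  obtain ⟨k, a, g, L, hdb, hL⟩ := exists_trace_list hAz
  -- exchange relation
  have hex : ∀ (f : A →ₗ[R] R) (x y : A), f x • (z * y) = f (z * x) • y := by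
    intro f x y
    have := central_comm_end hAz hz (f.smulRight y) x
    simpa [mul_smul_comm] using this
  refine ⟨(L.map fun p => g p.1 (z * p.2)).sum, ?_⟩
  have key : ∀ y : A, z * y = (L.map fun p => g p.1 (z * p.2)).sum • y := by
    intro y
    calc z * y = (L.map fun p => g p.1 p.2).sum • (z * y) := by rw [hL, one_smul]
      _ = (L.map fun w => (g w.1 w.2) • (z * y)).sum := list_sum_smul L _ _
      _ = (L.map fun w => (g w.1 (z * w.2)) • y).sum := by
            congr 1; exact List.map_congr_left (fun p _ => hex (g p.1) p.2 y)
      _ = (L.map fun p => g p.1 (z * p.2)).sum • y := (list_sum_smul L _ _).symm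
  rw [Algebra.algebraMap_eq_smul_one, ← key 1, mul_one]

end RZaux

namespace RZaux

variable {R A : Type*} [CommRing R] [Ring A] [Algebra R A]

/-- the twisted multiplication map `ψ_σ : a ⊗ b ↦ (x ↦ a * x * σ b)`. -/
noncomputable def psi (σ : A ≃ₐ[R] A) : (A ⊗[R] Aᵐᵒᵖ) →ₐ[R] Module.End R A :=
  (AzumayaHom R A).comp
    (Algebra.TensorProduct.map (AlgHom.id R A) (AlgHom.op σ.toAlgHom))

lemma psi_tmul (σ : A ≃ₐ[R] A) (a : A) (b : Aᵐᵒᵖ) (x : A) :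
    psi σ (a ⊗ₜ[R] b) x = a * (x * σ b.unop) := by
  simp [psi, Algebra.TensorProduct.map_tmul, azumayaHom_tmul]

/-- every element of `A` (in particular `1`) lies in `A · M_σ`. -/
lemma exists_left_span (hAz : IsAzumayaAlg R A) (σ : A ≃ₐ[R] A) :
    ∃ (n : ℕ) (a m : Fin n → A), (∀ i, m i ∈ rzModule R A σ) ∧
      ∑ i, a i * m i = 1 := by
  obtain ⟨n, a, g, hdb⟩ := exists_dualBasis hAz.1 hAz.2.1
  have hinj := hAz.2.2.2.1
  have hsurj := hAz.2.2.2.2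
  -- preimages of the rank-one endomorphisms `x ↦ g i x • 1`
  have ht : ∀ i, ∃ t : A ⊗[R] Aᵐᵒᵖ,
      AzumayaHom R A t = ((g i).smulRight (1 : A)) := fun i => hsurj _
  choose t hti using ht
  set m : Fin n → A := fun i => psi σ (t i) 1 with hm
  -- key switching identity
  have hswitch : ∀ (x : A) (i),
      (x ⊗ₜ[R] (1 : Aᵐᵒᵖ)) * t i = ((1 : A) ⊗ₜ[R] op x) * t i := by
    intro x i
    apply hinj
    rw [map_mul, map_mul, hti]
    ext y
    simp only [Module.End.mul_apply, LinearMap.smulRight_apply, azumayaHom_tmul,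
      unop_one, unop_op, mul_one, one_mul]
    rw [mul_smul_comm, smul_mul_assoc, mul_one, one_mul]
  have hmem : ∀ i, m i ∈ rzModule R A σ := by
    intro i
    rw [mem_rz]
    intro x
    have h1 : x * m i = psi σ ((x ⊗ₜ[R] (1 : Aᵐᵒᵖ)) * t i) 1 := by
      rw [map_mul]
      simp [Module.End.mul_apply, hm, psi_tmul]
    have h2 : m i * σ x = psi σ (((1 : A) ⊗ₜ[R] op x) * t i) 1 := by
      rw [map_mul]
      simp [Module.End.mul_apply, hm, psi_tmul]
    rw [h1, h2, hswitch]
  refine ⟨n, a, m, hmem, ?_⟩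
  have hone : ∑ i, (a i ⊗ₜ[R] (1 : Aᵐᵒᵖ)) * t i = 1 := by
    apply hinj
    rw [map_sum, map_one]
    ext y
    simp only [map_mul, LinearMap.sum_apply, Module.End.mul_apply, hti, Module.End.one_apply,
      azumayaHom_tmul, LinearMap.smulRight_apply, unop_one, mul_one]
    calc ∑ i, a i * (g i y • 1) = ∑ i, g i y • a i := by
          refine Finset.sum_congr rfl (fun i _ => ?_)
          rw [mul_smul_comm, mul_one]
      _ = y := hdb y
  calc ∑ i, a i * m i = ∑ i, psi σ ((a i ⊗ₜ[R] (1 : Aᵐᵒᵖ)) * t i) 1 := by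
        refine Finset.sum_congr rfl (fun i _ => ?_)
        rw [map_mul]
        simp [Module.End.mul_apply, hm, psi_tmul]
    _ = psi σ (∑ i, (a i ⊗ₜ[R] (1 : Aᵐᵒᵖ)) * t i) 1 := by
        rw [map_sum, LinearMap.sum_apply]
    _ = 1 := by rw [hone]; simp

lemma mul_central {σ : A ≃ₐ[R] A} {m n : A} (hm : m ∈ rzModule R A σ)
    (hn : n ∈ rzModule R A σ.symm) (x : A) : x * (m * n) = (m * n) * x := by
  have h1 := hm x
  have h2 := hn (σ x)
  rw [AlgEquiv.symm_apply_apply] at h2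
  rw [← mul_assoc, h1, mul_assoc, h2, ← mul_assoc]

lemma mul_central' {σ : A ≃ₐ[R] A} {m n : A} (hm : m ∈ rzModule R A σ)
    (hn : n ∈ rzModule R A σ.symm) (x : A) : x * (n * m) = (n * m) * x := by
  have h2 := hn x
  have h1 := hm (σ.symm x)
  rw [AlgEquiv.apply_symm_apply] at h1
  rw [← mul_assoc, h2, mul_assoc, h1, ← mul_assoc]

/-- the key consequence of the Azumaya condition: `1 = ∑ mᵢ * nᵢ` with
`mᵢ ∈ M_σ`, `nᵢ ∈ M_{σ⁻¹}`. -/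
lemma exists_pair_one (hAz : IsAzumayaAlg R A) (σ : A ≃ₐ[R] A) :
    ∃ (n : ℕ) (mt nt : Fin n → A), (∀ i, mt i ∈ rzModule R A σ) ∧
      (∀ i, nt i ∈ rzModule R A σ.symm) ∧ ∑ i, mt i * nt i = 1 := by
  obtain ⟨n₁, a, m, hm, hsum₁⟩ := exists_left_span hAz σ
  obtain ⟨n₂, b, nn, hnn, hsum₂⟩ := exists_left_span hAz σ.symm
  set Sp : Set A := {z | ∃ m' n', m' ∈ rzModule R A σ ∧ n' ∈ rzModule R A σ.symm ∧
    m' * n' = z} with hSp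
  set P : Submodule R A := Submodule.span R Sp with hP
  set I : Ideal R := Submodule.comap (Algebra.linearMap R A) P with hI
  -- scalars from the products
  have hprod : ∀ (i : Fin n₁) (j : Fin n₂), ∃ r : R,
      algebraMap R A r = m i * nn j ∧ r ∈ I := by
    intro i j
    obtain ⟨r, hr⟩ := central_eq_algebraMap hAz (fun x => (mul_central (hm i) (hnn j) x).symm)
    refine ⟨r, hr, ?_⟩
    show algebraMap R A r ∈ P
    rw [hr]
    exact Submodule.subset_span ⟨m i, nn j, hm i, hnn j, rfl⟩
  choose r hr hrI using hprod
  -- 1 = ∑ r i j • (a i * σ.symm (b j))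
  have hone : (1 : A) = ∑ i, ∑ j, r i j • (a i * σ.symm (b j)) := by
    have : (1 : A) = (∑ i, a i * m i) * (∑ j, b j * nn j) := by
      rw [hsum₁, hsum₂, one_mul]
    rw [Finset.sum_mul_sum] at this
    rw [this]
    refine Finset.sum_congr rfl (fun i _ => Finset.sum_congr rfl (fun j _ => ?_))
    -- (a i * m i) * (b j * nn j) = r i j • (a i * σ.symm (b j))
    have hmb : m i * b j = σ.symm (b j) * m i := by
      have := hm i (σ.symm (b j))
      rw [AlgEquiv.apply_symm_apply] at this
      exact this.symm
    calc a i * m i * (b j * nn j) = a i * (m i * (b j * nn j)) := by rw [mul_assoc]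
      _ = a i * (σ.symm (b j) * (m i * nn j)) := by
          rw [← mul_assoc (m i), hmb, mul_assoc]
      _ = a i * σ.symm (b j) * (m i * nn j) := by rw [mul_assoc]
      _ = a i * σ.symm (b j) * algebraMap R A (r i j) := by rw [hr]
      _ = r i j • (a i * σ.symm (b j)) := by
          rw [← Algebra.commutes, ← Algebra.smul_def]
  -- Nakayama: 1 ∈ I
  have hle : (⊤ : Submodule R A) ≤ I • ⊤ := by
    intro x _hx
    have : x = ∑ i, ∑ j, r i j • (x * (a i * σ.symm (b j))) := by
      calc x = x * 1 := (mul_one x).symm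
        _ = ∑ i, ∑ j, r i j • (x * (a i * σ.symm (b j))) := by
            rw [hone, Finset.mul_sum]
            refine Finset.sum_congr rfl (fun i _ => ?_)
            rw [Finset.mul_sum]
            refine Finset.sum_congr rfl (fun j _ => ?_)
            rw [mul_smul_comm]
    rw [this]
    refine Submodule.sum_mem _ (fun i _ => Submodule.sum_mem _ (fun j _ => ?_))
    exact Submodule.smul_mem_smul (hrI i j) trivial
  obtain ⟨s, hs1, hs0⟩ :=
    Submodule.exists_sub_one_mem_and_smul_eq_zero_of_fg_of_le_smul I ⊤ hAz.1.fg_top hle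
  have hs : s = 0 := by
    apply algebraMap_inj hAz.2.2.1
    have := hs0 1 trivial
    rw [Algebra.algebraMap_eq_smul_one, this, map_zero]
  have h1I : (1 : R) ∈ I := by
    have : -(s - 1) ∈ I := Submodule.neg_mem _ hs1
    rwa [hs, zero_sub, neg_neg] at this
  have h1P : (1 : A) ∈ P := by
    have : algebraMap R A 1 ∈ P := h1I
    rwa [map_one] at this
  -- extract a list representation
  have key : ∀ (y : A), y ∈ P → ∃ L : List (A × A),
      (∀ p ∈ L, p.1 ∈ rzModule R A σ ∧ p.2 ∈ rzModule R A σ.symm) ∧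
      (L.map fun p => p.1 * p.2).sum = y := by
    intro y hy
    induction hy using Submodule.span_induction with
    | mem w hw =>
        obtain ⟨m', n', hm', hn', rfl⟩ := hw
        exact ⟨[(m', n')], by simpa using ⟨hm', hn'⟩, by simp⟩
    | zero => exact ⟨[], by simp, by simp⟩
    | add w₁ w₂ h₁ h₂ ih₁ ih₂ =>
        obtain ⟨L₁, hL₁, hLs₁⟩ := ih₁; obtain ⟨L₂, hL₂, hLs₂⟩ := ih₂
        refine ⟨L₁ ++ L₂, ?_, by simp [hLs₁, hLs₂]⟩
        intro p hp
        rcases List.mem_append.1 hp with h | h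
        · exact hL₁ p h
        · exact hL₂ p h
    | smul c w hw ih =>
        obtain ⟨L, hL, hLs⟩ := ih
        refine ⟨L.map fun p => (c • p.1, p.2), ?_, ?_⟩
        · intro p hp
          obtain ⟨q, hq, rfl⟩ := List.mem_map.1 hp
          exact ⟨Submodule.smul_mem _ c (hL q hq).1, (hL q hq).2⟩
        · rw [List.map_map, ← hLs, List.smul_sum, List.map_map]
          congr 1
          exact List.map_congr_left (fun p _ => by simp [smul_mul_assoc])
  obtain ⟨L, hL, hLs⟩ := key 1 h1P
  -- convert the list to `Fin`-indexed families
  have hmemL : ∀ i : Fin L.length, L.get i ∈ L := fun i => List.get_mem L i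
  refine ⟨L.length, fun i => (L.get i).1, fun i => (L.get i).2,
    fun i => (hL _ (hmemL i)).1, fun i => (hL _ (hmemL i)).2, ?_⟩
  calc (∑ i, (L.get i).1 * (L.get i).2)
      = (List.ofFn fun i => (L.get i).1 * (L.get i).2).sum := (Fin.sum_ofFn _).symm
    _ = ((List.ofFn L.get).map fun p => p.1 * p.2).sum := by rw [List.map_ofFn]; rfl
    _ = (L.map fun p => p.1 * p.2).sum := by rw [List.ofFn_get]
    _ = 1 := hLs

end RZaux

namespace RZaux

variable {R A : Type*} [CommRing R] [Ring A] [Algebra R A]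

/-- `M_σ` is finitely generated and projective. -/
lemma rz_finite_projective (hAz : IsAzumayaAlg R A) (σ : A ≃ₐ[R] A) :
    Module.Finite R (rzModule R A σ) ∧ Module.Projective R (rzModule R A σ) := by
  obtain ⟨n, mt, nt, hmt, hnt, hsum⟩ := exists_pair_one hAz σ
  have hinj := algebraMap_inj hAz.2.2.1
  -- the dual functionals
  have hex : ∀ (t : Fin n) (m : rzModule R A σ), ∃ r : R,
      algebraMap R A r = nt t * (m : A) := by
    intro t m
    exact central_eq_algebraMap hAz
      (fun x => (mul_central' (m.2) (hnt t) x).symm)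
  choose ρ hρ using hex
  let f : rzModule R A σ →ₗ[R] (Fin n → R) :=
    { toFun := fun m => fun t => ρ t m
      map_add' := by
        intro m m'
        funext t
        apply hinj
        simp [Pi.add_apply, map_add, hρ, mul_add]
      map_smul' := by
        intro r m
        funext t
        apply hinj
        simp only [Pi.smul_apply, smul_eq_mul, map_mul, hρ, RingHom.id_apply,
          SetLike.val_smul, mul_smul_comm, Algebra.smul_def]
        rw [← mul_assoc, ← Algebra.commutes r, mul_assoc] }
  let mt' : Fin n → rzModule R A σ := fun t => ⟨mt t, hmt t⟩
  let g : (Fin n → R) →ₗ[R] rzModule R A σ :=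
    ∑ t : Fin n, (LinearMap.proj t : (Fin n → R) →ₗ[R] R).smulRight (mt' t)
  have hg : ∀ v, g v = ∑ t, v t • mt' t := by
    intro v; simp [g, LinearMap.sum_apply]
  have hgf : ∀ m, g (f m) = m := by
    intro m
    apply Subtype.ext
    rw [hg]
    push_cast
    calc (∑ t, ρ t m • mt t : A) = ∑ t, mt t * (nt t * m) := by
          refine Finset.sum_congr rfl (fun t _ => ?_)
          rw [← hρ, ← Algebra.commutes (ρ t m), ← Algebra.smul_def]
      _ = (∑ t, mt t * nt t) * m := by
          rw [Finset.sum_mul]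
          exact Finset.sum_congr rfl (fun t _ => (mul_assoc _ _ _).symm)
      _ = m := by rw [hsum, one_mul]
  constructor
  · exact Module.Finite.of_surjective g (fun m => ⟨f m, hgf m⟩)
  · exact Module.Projective.of_split f g (LinearMap.ext hgf)

end RZaux

/-- The Rosenberg–Zelinsky exact sequence for an Azumaya algebra `A` over a
commutative ring `R`: `1 → R^× → A^× → Aut_{R-alg}(A) → Pic(R)`.  The unit map
`R^× → A^×` is injective; a unit of `A` maps to the identity automorphism under
conjugation iff it comes from `R^×` (exactness at `A^×`); and an automorphism `σ`
is inner iff the invertible module `{a | x·a = a·σ(x)}` is trivial in `Pic(R)`,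
i.e. free of rank one (exactness at `Aut`); moreover each module
`{a | x·a = a·σ(x)}` is a finitely generated projective (rank-one) `R`-module. -/
theorem rosenberg_zelinsky (R A : Type*) [CommRing R] [Ring A] [Algebra R A]
    (hAz : IsAzumayaAlg R A) :
    Function.Injective (Units.map (algebraMap R A).toMonoidHom) ∧
    (∀ u : Aˣ, (∀ x : A, ↑u * x = x * ↑u) ↔ ∃ r : Rˣ, (↑u : A) = algebraMap R A ↑r) ∧
    (∀ σ : A ≃ₐ[R] A,
      (∃ u : Aˣ, ∀ x : A, σ x = ↑u * x * ↑u⁻¹) ↔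
        Nonempty ((rzModule R A σ) ≃ₗ[R] R)) ∧
    (∀ σ : A ≃ₐ[R] A,
      Module.Finite R (rzModule R A σ) ∧ Module.Projective R (rzModule R A σ)) := by
  have hinj := RZaux.algebraMap_inj hAz.2.2.1
  refine ⟨?_, ?_, ?_, fun σ => RZaux.rz_finite_projective hAz σ⟩
  · -- injectivity of `R^× → A^×`
    intro u v h
    ext
    exact hinj (congrArg Units.val h)
  · -- exactness at `A^×`
    intro u
    constructor
    · intro hu
      obtain ⟨r, hr⟩ := RZaux.central_eq_algebraMap hAz hu
      have hucinv : ∀ x : A, ↑u⁻¹ * x = x * ↑u⁻¹ :=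
        fun x => (Commute.units_inv_left (hu x)).eq
      obtain ⟨s, hs⟩ := RZaux.central_eq_algebraMap hAz hucinv
      have hrs : r * s = 1 := by
        apply hinj; rw [map_mul, map_one, hr, hs, Units.mul_inv]
      exact ⟨⟨r, s, hrs, by rw [mul_comm]; exact hrs⟩, hr.symm⟩
    · rintro ⟨r, hr⟩ x
      rw [hr, Algebra.commutes]
  · -- exactness at `Aut_{R-alg}(A)`
    intro σ
    constructor
    ·  -- inner ⇒ the module is free of rank one
      rintro ⟨u, hu⟩
      have hm₀ : (↑u⁻¹ : A) ∈ rzModule R A σ := by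
        rw [RZaux.mem_rz]
        intro x
        rw [hu x, ← mul_assoc, ← mul_assoc, Units.inv_mul, one_mul]
      -- the map `r ↦ r • u⁻¹`
      let e : R →ₗ[R] rzModule R A σ :=
        LinearMap.toSpanSingleton R _ (⟨(↑u⁻¹ : A), hm₀⟩ : rzModule R A σ)
      have he : ∀ r : R, ((e r : rzModule R A σ) : A) = r • (↑u⁻¹ : A) := fun r => rfl
      have hinj0 : ∀ r, e r = 0 → r = 0 := by
        intro r h0
        have h0' : r • (↑u⁻¹ : A) = 0 := by
          rw [← he r, h0]; rfl
        apply hinj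
        rw [map_zero, Algebra.algebraMap_eq_smul_one, ← Units.inv_mul u, ← smul_mul_assoc,
          h0', zero_mul]
      have heinj : Function.Injective e := by
        intro r s h
        have : e (r - s) = 0 := by rw [map_sub, h, sub_self]
        exact sub_eq_zero.mp (hinj0 _ this)
      have hesurj : Function.Surjective e := by
        rintro ⟨m, hm⟩
        have hcent : ∀ x : A, (m * ↑u) * x = x * (m * ↑u) := by
          intro x
          have : x * (m * ↑u) = (m * ↑u) * x := by
            calc x * (m * ↑u) = (x * m) * ↑u := by rw [mul_assoc]
              _ = (m * σ x) * ↑u := by rw [hm x]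
              _ = m * (σ x * ↑u) := by rw [mul_assoc]
              _ = m * (↑u * x * ↑u⁻¹ * ↑u) := by rw [hu x]
              _ = m * (↑u * x) := by rw [mul_assoc (↑u * x : A), Units.inv_mul, mul_one]
              _ = (m * ↑u) * x := by rw [mul_assoc]
          exact this.symm
        obtain ⟨r, hr⟩ := RZaux.central_eq_algebraMap hAz hcent
        refine ⟨r, ?_⟩
        apply Subtype.ext
        rw [he r, Algebra.smul_def, hr, mul_assoc, Units.mul_inv, mul_one]
      exact ⟨(LinearEquiv.ofBijective e ⟨heinj, hesurj⟩).symm⟩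
    · -- free of rank one ⇒ inner
      rintro ⟨g0⟩
      set u0A : A := ↑(g0.symm 1) with hu0A
      have hu0 : u0A ∈ rzModule R A σ := (g0.symm 1).2
      have hrep : ∀ m : rzModule R A σ, (m : A) = g0 m • u0A := by
        intro m
        have h1 : g0 m • g0.symm 1 = g0.symm (g0 m • (1 : R)) :=
          (map_smul g0.symm (g0 m) 1).symm
        rw [smul_eq_mul, mul_one, LinearEquiv.symm_apply_apply] at h1
        exact congrArg Subtype.val h1.symm
      obtain ⟨n₁, mt, nt, hmt, hnt, hsum₁⟩ := RZaux.exists_pair_one hAz σ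
      obtain ⟨n₂, ms, ns, hms, hns, hsum₂⟩ := RZaux.exists_pair_one hAz σ.symm
      have hns' : ∀ s, ns s ∈ rzModule R A σ := by
        intro s
        have := hns s
        rwa [AlgEquiv.symm_symm] at this
      set v : A := ∑ t, g0 ⟨mt t, hmt t⟩ • nt t with hvdef
      have hv : v ∈ rzModule R A σ.symm :=
        Submodule.sum_mem _ (fun t _ => Submodule.smul_mem _ _ (hnt t))
      set w : A := ∑ s, g0 ⟨ns s, hns' s⟩ • ms s with hwdef
      have huv : u0A * v = 1 := by
        calc u0A * v = ∑ t, u0A * (g0 ⟨mt t, hmt t⟩ • nt t) := Finset.mul_sum _ _ _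
          _ = ∑ t, mt t * nt t := by
              refine Finset.sum_congr rfl (fun t _ => ?_)
              rw [mul_smul_comm, ← smul_mul_assoc, ← hrep ⟨mt t, hmt t⟩]
          _ = 1 := hsum₁
      have hwu : w * u0A = 1 := by
        calc w * u0A = ∑ s, (g0 ⟨ns s, hns' s⟩ • ms s) * u0A := Finset.sum_mul _ _ _
          _ = ∑ s, ms s * ns s := by
              refine Finset.sum_congr rfl (fun s _ => ?_)
              rw [smul_mul_assoc, ← mul_smul_comm, ← hrep ⟨ns s, hns' s⟩]
          _ = 1 := hsum₂
      have hvw : w = v := by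
        calc w = w * (u0A * v) := by rw [huv, mul_one]
          _ = (w * u0A) * v := by rw [mul_assoc]
          _ = v := by rw [hwu, one_mul]
      have hvu : v * u0A = 1 := by rw [← hvw, hwu]
      refine ⟨⟨v, u0A, hvu, huv⟩, ?_⟩
      intro x
      show σ x = v * x * u0A
      have hx := hu0 x
      calc σ x = 1 * σ x := (one_mul _).symm
        _ = (v * u0A) * σ x := by rw [hvu]
        _ = v * (u0A * σ x) := by rw [mul_assoc]
        _ = v * (x * u0A) := by rw [← hx]
        _ = v * x * u0A := by rw [mul_assoc]
end

section
/- Let R be a commutative ring and A an Azumaya R-algebra. Every R-algebra automorphism of A that is trivial modulo every maximal ideal on the associated Picard class is inner if Pic(R) is trivial; in particular, if Pic(R) = 0 then the map A^× → Aut_{R-alg}(A) given by conjugation is surjective, i.e. every R-algebra automorphism of A is inner (Skolem–Noether for rings with trivial Picard group). -/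
open TensorProduct MulOpposite

universe u


namespace SNAux

variable {R A : Type*} [CommRing R] [Ring A] [Algebra R A]

lemma exists_dual_basis_trace [Module.Finite R A] [Module.Projective R A] [FaithfulSMul R A] :
    ∃ (n : ℕ) (x : Fin n → A) (ψ : Fin n → (A →ₗ[R] R)) (a : Fin n → A),
      (∀ m : A, ∑ j, ψ j m • x j = m) ∧ ∑ j, ψ j (a j) = 1 := by
  obtain ⟨n, f, g, -, -, hfg⟩ := Module.Finite.exists_comp_eq_id_of_projective R A
  set x : Fin n → A := fun j => f (Pi.single j 1) with hx
  set ψ : Fin n → (A →ₗ[R] R) := fun j => (LinearMap.proj j).comp g with hψ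
  have hdual : ∀ m : A, ∑ j, ψ j m • x j = m := by
    intro m
    have h1 : ∀ j, ψ j m • x j = f (Pi.single j (g m j)) := by
      intro j
      rw [hx, hψ, ← map_smul]
      congr 1
      ext i
      by_cases h : i = j <;> simp [Pi.single_apply, h]
    simp_rw [h1, ← map_sum, Finset.univ_sum_single]
    exact congrArg (fun h => h m) (congrArg DFunLike.coe hfg)
  set χ : (Fin n → A) →ₗ[R] R := ∑ j, (ψ j).comp (LinearMap.proj j) with hχ
  have hχapp : ∀ m : Fin n → A, χ m = ∑ j, ψ j (m j) := by
    intro m; simp [hχ, LinearMap.sum_apply]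
  set T : Ideal R := LinearMap.range χ with hT
  have hmemT : ∀ (l : Fin n) (m' : A), ψ l m' ∈ T := by
    intro l m'
    refine ⟨Pi.single l m', ?_⟩
    rw [hχapp]
    rw [Finset.sum_eq_single l]
    · simp
    · intro b _ hb; simp [Pi.single_apply, hb]
    · simp
  have hTfg : T.FG := by
    have : Module.Finite R (LinearMap.range χ) := Module.Finite.range χ
    exact (Module.Finite.iff_fg).mp this
  have hle : T ≤ T • T := by
    rintro r ⟨m, rfl⟩
    rw [hχapp]
    refine Submodule.sum_mem _ fun j _ => ?_
    have : ψ j (m j) = ∑ l, ψ l (m j) • ψ j (x l) := by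
      conv_lhs => rw [← hdual (m j)]
      rw [map_sum]
      simp [smul_eq_mul]
    rw [this]
    exact Submodule.sum_mem _ fun l _ =>
      Submodule.smul_mem_smul (hmemT l (m j)) (hmemT j (x l))
  obtain ⟨r, hr1, hr0⟩ :=
    Submodule.exists_sub_one_mem_and_smul_eq_zero_of_fg_of_le_smul T T hTfg hle
  have hrm : ∀ m : A, r • m = (0 : A) := by
    intro m
    conv_lhs => rw [← hdual m]
    rw [Finset.smul_sum]
    refine Finset.sum_eq_zero fun j _ => ?_
    rw [smul_smul]
    have : r * ψ j m = 0 := hr0 _ (hmemT j m)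
    rw [this, zero_smul]
  have hr : r = 0 := eq_of_smul_eq_smul (α := A) fun m => by rw [hrm m, zero_smul]
  have h1T : (1 : R) ∈ T := by
    rw [hr] at hr1
    have := T.neg_mem hr1
    simpa using this
  obtain ⟨a, ha⟩ := h1T
  exact ⟨n, x, ψ, a, hdual, by rw [← hχapp]; exact ha⟩


lemma azumayaHom_tmul (a : A) (b : Aᵐᵒᵖ) (x : A) :
    AzumayaHom R A (a ⊗ₜ[R] b) x = a * x * b.unop := by
  simp [AzumayaHom, mulRightHom, mul_assoc]

/-- `x ↦ algebraMap R A (ψ x)` as an endomorphism. -/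
noncomputable def Tψ (ψ : A →ₗ[R] R) : Module.End R A := (Algebra.linearMap R A) ∘ₗ ψ

lemma Tψ_apply (ψ : A →ₗ[R] R) (m : A) : Tψ ψ m = algebraMap R A (ψ m) := rfl

lemma mulLeft_Tψ (c : A) (ψ : A →ₗ[R] R) :
    LinearMap.mulLeft R c * Tψ ψ = LinearMap.mulRight R c * Tψ ψ := by
  ext m
  simp only [Module.End.mul_apply, Tψ_apply, LinearMap.mulLeft_apply, LinearMap.mulRight_apply]
  exact (Algebra.commutes _ _).symm

lemma star_sum {n : ℕ} (x : Fin n → A) (ψ : Fin n → (A →ₗ[R] R))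
    (hdual : ∀ m : A, ∑ j, ψ j m • x j = m) (f : Module.End R A) :
    ∑ l, LinearMap.mulLeft R (f (x l)) * Tψ (ψ l) = f := by
  ext m
  rw [LinearMap.sum_apply]
  have h1 : ∀ l, (LinearMap.mulLeft R (f (x l)) * Tψ (ψ l)) m = ψ l m • f (x l) := by
    intro l
    simp only [Module.End.mul_apply, Tψ_apply, LinearMap.mulLeft_apply]
    rw [← Algebra.commutes, ← Algebra.smul_def]
  simp_rw [h1, ← map_smul, ← map_sum, hdual m]

section Phi

variable (hbij : Function.Bijective (AzumayaHom R A)) (σ : A ≃ₐ[R] A)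

noncomputable def eAz : (A ⊗[R] Aᵐᵒᵖ) ≃ₐ[R] Module.End R A :=
  AlgEquiv.ofBijective (AzumayaHom R A) hbij

lemma eAz_left (a : A) : eAz hbij (a ⊗ₜ 1) = LinearMap.mulLeft R a := by
  ext x
  show AzumayaHom R A (a ⊗ₜ 1) x = _
  rw [azumayaHom_tmul]
  simp

lemma eAz_right (b : A) : eAz hbij ((1 : A) ⊗ₜ op b) = LinearMap.mulRight R b := by
  ext x
  show AzumayaHom R A ((1 : A) ⊗ₜ op b) x = _
  rw [azumayaHom_tmul]
  simp

noncomputable def Phi : Module.End R A ≃ₐ[R] Module.End R A :=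
  ((eAz hbij).symm.trans (Algebra.TensorProduct.congr σ AlgEquiv.refl)).trans (eAz hbij)

lemma Phi_left (a : A) :
    Phi hbij σ (LinearMap.mulLeft R a) = LinearMap.mulLeft R (σ a) := by
  rw [Phi]
  simp only [AlgEquiv.trans_apply]
  rw [← eAz_left hbij a, AlgEquiv.symm_apply_apply]
  rw [show (Algebra.TensorProduct.congr σ (AlgEquiv.refl (R := R) (A₁ := Aᵐᵒᵖ)))
      (a ⊗ₜ 1) = σ a ⊗ₜ 1 by simp [Algebra.TensorProduct.congr_apply]]
  exact eAz_left hbij (σ a)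

lemma Phi_right (b : A) :
    Phi hbij σ (LinearMap.mulRight R b) = LinearMap.mulRight R b := by
  rw [Phi]
  simp only [AlgEquiv.trans_apply]
  rw [← eAz_right hbij b, AlgEquiv.symm_apply_apply]
  rw [show (Algebra.TensorProduct.congr σ (AlgEquiv.refl (R := R) (A₁ := Aᵐᵒᵖ)))
      ((1:A) ⊗ₜ op b) = (1:A) ⊗ₜ op b by simp [Algebra.TensorProduct.congr_apply]]

lemma Phi_symm_right (b : A) :
    (Phi hbij σ).symm (LinearMap.mulRight R b) = LinearMap.mulRight R b := by
  rw [← Phi_right hbij σ b, AlgEquiv.symm_apply_apply, Phi_right]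

end Phi

end SNAux

namespace SNAux2
open SNAux

variable {R A : Type*} [CommRing R] [Ring A] [Algebra R A]

/-- The submodule `{u | ∀ a, σ a * u = u * a}`. -/
def Pset (σ : A ≃ₐ[R] A) : Submodule R A where
  carrier := {u | ∀ a, σ a * u = u * a}
  add_mem' := fun hp hq a => by rw [mul_add, add_mul, hp a, hq a]
  zero_mem' := fun a => by simp
  smul_mem' := fun r u hu a => by rw [mul_smul_comm, smul_mul_assoc, hu a]

/-- The submodule `{v | ∀ a, v * σ a = a * v}`. -/
def Qset (σ : A ≃ₐ[R] A) : Submodule R A where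
  carrier := {v | ∀ a, v * σ a = a * v}
  add_mem' := fun hp hq a => by rw [add_mul, mul_add, hp a, hq a]
  zero_mem' := fun a => by simp
  smul_mem' := fun r v hv a => by rw [smul_mul_assoc, mul_smul_comm, hv a]

variable (hbij : Function.Bijective (AzumayaHom R A)) (σ : A ≃ₐ[R] A)

noncomputable def uu (ψ : A →ₗ[R] R) (xl : A) : A := Phi hbij σ (Tψ ψ) xl

noncomputable def vv (ψ : A →ₗ[R] R) (aj : A) : A := (Phi hbij σ).symm (Tψ ψ) aj

lemma uu_mem (ψ : A →ₗ[R] R) (xl : A) : uu hbij σ ψ xl ∈ Pset σ := by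
  intro a
  show σ a * _ = _ * a
  have h : LinearMap.mulLeft R (σ a) * Phi hbij σ (Tψ ψ)
      = LinearMap.mulRight R a * Phi hbij σ (Tψ ψ) := by
    rw [← Phi_left hbij σ a, ← Phi_right hbij σ a, ← map_mul, ← map_mul, mulLeft_Tψ]
  have h2 := congrArg (fun f : Module.End R A => f xl) h
  simpa [uu, Module.End.mul_apply] using h2

lemma vv_mem (ψ : A →ₗ[R] R) (aj : A) : vv hbij σ ψ aj ∈ Qset σ := by
  intro a
  show _ * σ a = a * _
  have h : LinearMap.mulRight R (σ a) * (Phi hbij σ).symm (Tψ ψ)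
      = LinearMap.mulLeft R a * (Phi hbij σ).symm (Tψ ψ) := by
    apply (Phi hbij σ).injective
    rw [map_mul, map_mul, AlgEquiv.apply_symm_apply,
      Phi_right, Phi_left]
    exact (mulLeft_Tψ _ _).symm
  have h2 := congrArg (fun f : Module.End R A => f aj) h
  simpa [vv, Module.End.mul_apply] using h2

lemma sum_vv_uu {n : ℕ} (x : Fin n → A) (ψ : Fin n → (A →ₗ[R] R)) (a : Fin n → A)
    (hdual : ∀ m : A, ∑ j, ψ j m • x j = m) (ha : ∑ j, ψ j (a j) = 1) :
    ∑ j, ∑ l, vv hbij σ (ψ l) (a j) * uu hbij σ (ψ j) (x l) = 1 := by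
  have key : ∀ j l, vv hbij σ (ψ l) (a j) * uu hbij σ (ψ j) (x l)
      = ((Phi hbij σ).symm (LinearMap.mulLeft R (uu hbij σ (ψ j) (x l)) * Tψ (ψ l))) (a j) := by
    intro j l
    rw [mulLeft_Tψ, map_mul, Phi_symm_right]
    simp [vv, Module.End.mul_apply]
  have inner : ∀ j, ∑ l, vv hbij σ (ψ l) (a j) * uu hbij σ (ψ j) (x l)
      = algebraMap R A (ψ j (a j)) := by
    intro j
    simp_rw [key]
    rw [← LinearMap.sum_apply, ← map_sum]
    have : ∑ l, LinearMap.mulLeft R (uu hbij σ (ψ j) (x l)) * Tψ (ψ l)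
        = Phi hbij σ (Tψ (ψ j)) :=
      star_sum x ψ hdual (Phi hbij σ (Tψ (ψ j)))
    rw [this, AlgEquiv.symm_apply_apply, Tψ_apply]
  simp_rw [inner, ← map_sum, ha, map_one]

end SNAux2

namespace SNAux3
open SNAux SNAux2

variable {R A : Type*} [CommRing R] [Ring A] [Algebra R A]

lemma mul_comm_of_forall (hsurj : Function.Surjective (AzumayaHom R A)) {z : A}
    (hz : ∀ a, a * z = z * a) (g : Module.End R A) (m : A) :
    z * g m = g (z * m) := by
  obtain ⟨w, hw⟩ := hsurj g
  rw [← hw]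
  clear hw
  induction w using TensorProduct.induction_on with
  | zero => simp
  | tmul a b =>
      rw [azumayaHom_tmul, azumayaHom_tmul]
      have h1 : z * (a * m) = a * (z * m) := by
        rw [← mul_assoc, ← hz a, mul_assoc]
      rw [← mul_assoc, h1]
  | add s t hs ht =>
      rw [map_add, LinearMap.add_apply, LinearMap.add_apply, mul_add, hs, ht]

lemma central_smul_eq {n : ℕ} (ψ : Fin n → (A →ₗ[R] R)) (a : Fin n → A)
    (ha : ∑ j, ψ j (a j) = 1)
    (hsurj : Function.Surjective (AzumayaHom R A)) {z : A}
    (hz : ∀ b, b * z = z * b) (m : A) :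
    z * m = (∑ j, ψ j (z * a j)) • m := by
  have key : ∀ j, ψ j (a j) • (z * m) = ψ j (z * a j) • m := by
    intro j
    have h := mul_comm_of_forall hsurj hz (LinearMap.smulRight (ψ j) m) (a j)
    simpa [LinearMap.smulRight_apply, mul_smul_comm] using h
  calc z * m = (∑ j, ψ j (a j)) • (z * m) := by rw [ha, one_smul]
    _ = ∑ j, ψ j (a j) • (z * m) := Finset.sum_smul
    _ = ∑ j, ψ j (z * a j) • m := by simp_rw [key]
    _ = (∑ j, ψ j (z * a j)) • m := Finset.sum_smul.symm

end SNAux3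

open SNAux SNAux2 SNAux3 in
theorem skolem_noether_of_trivial_pic' (R A : Type u) [CommRing R] [Ring A] [Algebra R A]
    (hFin : Module.Finite R A) (hProj : Module.Projective R A) (hFaith : FaithfulSMul R A)
    (hbij : Function.Bijective (AzumayaHom R A))
    (hPic : ∀ (M N : Type u) [AddCommGroup M] [Module R M] [AddCommGroup N] [Module R N],
      Nonempty ((M ⊗[R] N) ≃ₗ[R] R) → Nonempty (M ≃ₗ[R] R)) :
    ∀ σ : A ≃ₐ[R] A, ∃ u : Aˣ, ∀ x : A, σ x = ↑u * x * ↑u⁻¹ := by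
  intro σ
  obtain ⟨n, x, ψ, a, hdual, ha⟩ := exists_dual_basis_trace (R := R) (A := A)
  set u : Fin n → Fin n → A := fun j l => uu hbij σ (ψ j) (x l) with hu
  set v : Fin n → Fin n → A := fun j l => vv hbij σ (ψ l) (a j) with hv
  have humem : ∀ j l, u j l ∈ Pset σ := fun j l => uu_mem hbij σ (ψ j) (x l)
  have hvmem : ∀ j l, v j l ∈ Qset σ := fun j l => vv_mem hbij σ (ψ l) (a j)
  have hsum : ∑ j, ∑ l, v j l * u j l = 1 := sum_vv_uu hbij σ x ψ a hdual ha
  -- the trace functional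
  set tl : A →ₗ[R] R := ∑ j, (ψ j) ∘ₗ LinearMap.mulRight R (a j) with htl
  have htl_apply : ∀ z : A, tl z = ∑ j, ψ j (z * a j) := fun z => by
    simp [htl, LinearMap.sum_apply]
  have hcent : ∀ z : A, (∀ b, b * z = z * b) → algebraMap R A (tl z) = z := by
    intro z hz
    have h := central_smul_eq ψ a ha hbij.surjective hz 1
    rw [mul_one] at h
    rw [htl_apply z, Algebra.algebraMap_eq_smul_one, ← h]
  -- centrality of mixed products
  have hqp : ∀ p ∈ Pset σ, ∀ q ∈ Qset σ, ∀ b, b * (q * p) = (q * p) * b := by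
    intro p hp q hq b
    have h1 : b * q = q * σ b := (hq b).symm
    rw [← mul_assoc, h1, mul_assoc, hp b, ← mul_assoc]
  have hpq : ∀ p ∈ Pset σ, ∀ q ∈ Qset σ, ∀ b, b * (p * q) = (p * q) * b := by
    intro p hp q hq b
    obtain ⟨c, rfl⟩ := σ.surjective b
    rw [← mul_assoc, hp c, mul_assoc, ← hq c, ← mul_assoc]
  have halgqp : ∀ p ∈ Pset σ, ∀ q ∈ Qset σ,
      algebraMap R A (tl ((q : A) * p)) = q * p :=
    fun p hp q hq => hcent _ (hqp p hp q hq)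
  have halgpq : ∀ p ∈ Pset σ, ∀ q ∈ Qset σ,
      algebraMap R A (tl ((p : A) * q)) = p * q :=
    fun p hp q hq => hcent _ (hpq p hp q hq)
  -- the pairing
  set β₀ : Pset σ →ₗ[R] Qset σ →ₗ[R] R :=
    LinearMap.mk₂ R (fun p q => tl ((q : A) * (p : A)))
      (fun p p' q => by simp [mul_add])
      (fun c p q => by simp [mul_smul_comm, smul_eq_mul])
      (fun p q q' => by simp [add_mul])
      (fun c p q => by simp [smul_mul_assoc, smul_eq_mul]) with hβ₀
  have hβ₀_apply : ∀ (p : Pset σ) (q : Qset σ), β₀ p q = tl ((q : A) * (p : A)) :=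
    fun p q => rfl
  set β : (Pset σ ⊗[R] Qset σ) →ₗ[R] R := TensorProduct.lift β₀ with hβ
  set w₀ : Pset σ ⊗[R] Qset σ :=
    ∑ j, ∑ l, (⟨u j l, humem j l⟩ : Pset σ) ⊗ₜ[R] (⟨v j l, hvmem j l⟩ : Qset σ) with hw₀
  have hβw₀ : β w₀ = 1 := by
    rw [hw₀, map_sum]
    have h1 : ∀ j, β (∑ l, (⟨u j l, humem j l⟩ : Pset σ) ⊗ₜ[R] (⟨v j l, hvmem j l⟩ : Qset σ))
        = ∑ l, tl (v j l * u j l) := by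
      intro j
      rw [map_sum]
      exact Finset.sum_congr rfl fun l _ => rfl
    simp_rw [h1, ← map_sum, hsum]
    rw [htl_apply]
    simpa using ha
  set γ : R →ₗ[R] (Pset σ ⊗[R] Qset σ) :=
    LinearMap.toSpanSingleton R _ w₀ with hγ
  have hβγ : β ∘ₗ γ = LinearMap.id := by
    ext
    simp only [LinearMap.comp_apply, hγ, LinearMap.toSpanSingleton_apply, map_smul,
      LinearMap.id_apply, hβw₀, smul_eq_mul, mul_one]
  have hγβ : γ ∘ₗ β = LinearMap.id := by
    apply TensorProduct.ext'
    intro p q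
    simp only [LinearMap.comp_apply, LinearMap.id_apply, hγ,
      LinearMap.toSpanSingleton_apply]
    rw [show β (p ⊗ₜ[R] q) = tl ((q : A) * (p : A)) from rfl]
    have hstep1 : ∀ j l, tl ((q : A) * (p : A)) • (⟨v j l, hvmem j l⟩ : Qset σ)
        = tl ((p : A) * v j l) • q := by
      intro j l
      apply Subtype.ext
      show tl ((q : A) * (p : A)) • v j l = tl ((p : A) * v j l) • (q : A)
      rw [Algebra.smul_def, Algebra.smul_def]
      rw [halgqp (p : A) p.2 (q : A) q.2]
      rw [halgpq (p : A) p.2 (v j l) (hvmem j l)]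
      rw [mul_assoc, hpq (p : A) p.2 (v j l) (hvmem j l) (q : A)]
    have hstep : ∀ j l, tl ((q : A) * (p : A)) •
        ((⟨u j l, humem j l⟩ : Pset σ) ⊗ₜ[R] (⟨v j l, hvmem j l⟩ : Qset σ))
        = (tl ((p : A) * v j l) • (⟨u j l, humem j l⟩ : Pset σ)) ⊗ₜ[R] q := by
      intro j l
      rw [← TensorProduct.tmul_smul, hstep1 j l, TensorProduct.smul_tmul]
    rw [hw₀, Finset.smul_sum]
    simp_rw [Finset.smul_sum, hstep, ← TensorProduct.sum_tmul]
    congr 1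
    apply Subtype.ext
    push_cast
    have hterm : ∀ j l, tl ((p : A) * v j l) • u j l = (p : A) * (v j l * u j l) := by
      intro j l
      rw [Algebra.smul_def, halgpq (p : A) p.2 (v j l) (hvmem j l), mul_assoc]
    calc ∑ j, ∑ l, tl ((p : A) * v j l) • u j l
        = ∑ j, ∑ l, (p : A) * (v j l * u j l) := by simp_rw [hterm]
      _ = (p : A) * ∑ j, ∑ l, v j l * u j l := by simp_rw [← Finset.mul_sum]
      _ = (p : A) := by rw [hsum, mul_one]
  -- triviality of the Picard group
  obtain ⟨eP⟩ := hPic (Pset σ) (Qset σ) ⟨LinearEquiv.ofLinear β γ hβγ hγβ⟩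
  set u₀ : Pset σ := eP.symm 1 with hu₀
  have hrep : ∀ p : Pset σ, (p : A) = eP p • ((u₀ : Pset σ) : A) := by
    intro p
    have h : p = eP p • u₀ := by
      calc p = eP.symm (eP p) := (eP.symm_apply_apply p).symm
        _ = eP.symm (eP p • 1) := by rw [smul_eq_mul, mul_one]
        _ = eP p • u₀ := by rw [map_smul, hu₀]
    calc (p : A) = ((eP p • u₀ : Pset σ) : A) := by rw [← h]
      _ = eP p • ((u₀ : Pset σ) : A) := rfl
  set w : A := ∑ j, ∑ l, eP ⟨u j l, humem j l⟩ • v j l with hw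
  have hwQ : w ∈ Qset σ := by
    refine Submodule.sum_mem _ fun j _ => Submodule.sum_mem _ fun l _ => ?_
    exact Submodule.smul_mem _ _ (hvmem j l)
  have hwu₀ : w * (u₀ : A) = 1 := by
    rw [hw, Finset.sum_mul]
    rw [← hsum]
    refine Finset.sum_congr rfl fun j _ => ?_
    rw [Finset.sum_mul]
    refine Finset.sum_congr rfl fun l _ => ?_
    rw [smul_mul_assoc, ← mul_smul_comm]
    congr 1
    exact (hrep ⟨u j l, humem j l⟩).symm
  have hu₀P : (u₀ : A) ∈ Pset σ := u₀.2
  have hzc : ∀ b, b * ((u₀ : A) * w) = ((u₀ : A) * w) * b :=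
    hpq (u₀ : A) hu₀P w hwQ
  have hzu : ((u₀ : A) * w) * (u₀ : A) = (u₀ : A) := by
    rw [mul_assoc, hwu₀, mul_one]
  have hu₀w : (u₀ : A) * w = 1 := by
    have h0 : ((1 : A) - (u₀ : A) * w) = 0 := by
      calc (1 : A) - (u₀ : A) * w
          = ((1 : A) - (u₀ : A) * w) * (w * (u₀ : A)) := by rw [hwu₀, mul_one]
        _ = (((1 : A) - (u₀ : A) * w) * w) * (u₀ : A) := by rw [mul_assoc]
        _ = (w * ((1 : A) - (u₀ : A) * w)) * (u₀ : A) := by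
            congr 1
            rw [sub_mul, mul_sub, mul_one, one_mul, hzc w]
        _ = w * (((1 : A) - (u₀ : A) * w) * (u₀ : A)) := by rw [mul_assoc]
        _ = w * ((u₀ : A) - ((u₀ : A) * w) * (u₀ : A)) := by rw [sub_mul, one_mul]
        _ = 0 := by rw [hzu, sub_self, mul_zero]
    have := sub_eq_zero.mp h0
    exact this.symm
  refine ⟨⟨(u₀ : A), w, hu₀w, hwu₀⟩, fun y => ?_⟩
  show σ y = (u₀ : A) * y * w
  calc σ y = σ y * ((u₀ : A) * w) := by rw [hu₀w, mul_one]
    _ = (σ y * (u₀ : A)) * w := by rw [mul_assoc]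
    _ = ((u₀ : A) * y) * w := by rw [hu₀P y]


/-- Skolem–Noether for rings with trivial Picard group: if every invertible
`R`-module is free of rank one, then every `R`-algebra automorphism of an
Azumaya `R`-algebra `A` is inner, i.e. the conjugation map `A^× → Aut_{R-alg}(A)`
is surjective. -/
theorem skolem_noether_of_trivial_pic (R A : Type u) [CommRing R] [Ring A] [Algebra R A]
    (hAz : IsAzumayaAlg R A)
    (hPic : ∀ (M N : Type u) [AddCommGroup M] [Module R M] [AddCommGroup N] [Module R N],
      Nonempty ((M ⊗[R] N) ≃ₗ[R] R) → Nonempty (M ≃ₗ[R] R)) :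
    ∀ σ : A ≃ₐ[R] A, ∃ u : Aˣ, ∀ x : A, σ x = ↑u * x * ↑u⁻¹ := by
  obtain ⟨hFin, hProj, hFaith, hbij⟩ := hAz
  exact skolem_noether_of_trivial_pic' R A hFin hProj hFaith hbij hPic
end

section
/- Let R be a commutative ring and A, B two Azumaya R-algebras. Then A ⊗_R B is an Azumaya R-algebra. -/
open TensorProduct MulOpposite

theorem homTensorHomMap_bijective' (R M N P Q : Type*) [CommRing R]
    [AddCommGroup M] [AddCommGroup N] [AddCommGroup P] [AddCommGroup Q]
    [Module R M] [Module R N] [Module R P] [Module R Q]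
    [Module.Finite R M] [Module.Projective R M]
    [Module.Finite R N] [Module.Projective R N] :
    Function.Bijective (homTensorHomMap (.id R) M N P Q) := by
  obtain ⟨n, p, i, -, -, hpi⟩ := Module.Finite.exists_comp_eq_id_of_projective R M
  obtain ⟨m, q, j, -, -, hqj⟩ := Module.Finite.exists_comp_eq_id_of_projective R N
  let e := homTensorHomEquiv R (Fin n → R) (Fin m → R) P Q
  let α : (M ⊗[R] N →ₗ[R] P ⊗[R] Q) →ₗ[R] ((Fin n → R) ⊗[R] (Fin m → R) →ₗ[R] P ⊗[R] Q) :=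
    LinearMap.lcomp R _ (TensorProduct.map p q)
  let β : ((Fin n → R) →ₗ[R] P) ⊗[R] ((Fin m → R) →ₗ[R] Q) →ₗ[R]
      (M →ₗ[R] P) ⊗[R] (N →ₗ[R] Q) :=
    TensorProduct.map (LinearMap.lcomp R P i) (LinearMap.lcomp R Q j)
  let ψ : (M ⊗[R] N →ₗ[R] P ⊗[R] Q) →ₗ[R] (M →ₗ[R] P) ⊗[R] (N →ₗ[R] Q) :=
    β ∘ₗ (e.symm : _ →ₗ[R] _) ∘ₗ α
  have key : (homTensorHomMap (.id R) M N P Q) ∘ₗ β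
      = (LinearMap.lcomp R _ (TensorProduct.map i j)) ∘ₗ (e : _ →ₗ[R] _) := by
    refine TensorProduct.ext' fun f g => ?_
    simp only [LinearMap.coe_comp, Function.comp_apply, TensorProduct.map_tmul,
      homTensorHomMap_apply, LinearEquiv.coe_coe, e, homTensorHomEquiv_apply, β,
      LinearMap.lcomp_apply']
    exact TensorProduct.map_comp f g i j
  have h1 : ψ ∘ₗ homTensorHomMap (.id R) M N P Q = LinearMap.id := by
    refine TensorProduct.ext' fun f g => ?_
    simp only [LinearMap.coe_comp, Function.comp_apply, homTensorHomMap_apply,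
      LinearMap.id_coe, id_eq, ψ, α, β, LinearMap.lcomp_apply', LinearEquiv.coe_coe]
    have h3 : TensorProduct.map f g ∘ₗ TensorProduct.map p q
        = TensorProduct.map (f ∘ₗ p) (g ∘ₗ q) := (TensorProduct.map_comp f g p q).symm
    rw [h3]
    have h4 : e.symm (TensorProduct.map (f ∘ₗ p) (g ∘ₗ q)) = (f ∘ₗ p) ⊗ₜ (g ∘ₗ q) := by
      rw [LinearEquiv.symm_apply_eq]
      simp only [e, homTensorHomEquiv_apply, homTensorHomMap_apply]
    rw [h4, TensorProduct.map_tmul]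
    simp only [LinearMap.lcomp_apply', LinearMap.comp_assoc, hpi, hqj, LinearMap.comp_id]
  have h2 : homTensorHomMap (.id R) M N P Q ∘ₗ ψ = LinearMap.id := by
    apply LinearMap.ext
    intro h
    have h5 := LinearMap.congr_fun key (e.symm (α h))
    simp only [LinearMap.coe_comp, Function.comp_apply, LinearEquiv.coe_coe,
      LinearEquiv.apply_symm_apply] at h5
    simp only [LinearMap.coe_comp, Function.comp_apply, LinearEquiv.coe_coe,
      LinearMap.id_coe, id_eq, ψ]
    rw [h5]
    simp only [LinearMap.lcomp_apply', α]
    rw [LinearMap.comp_assoc, ← TensorProduct.map_comp, hpi, hqj, TensorProduct.map_id,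
      LinearMap.comp_id]
  exact Function.bijective_iff_has_inverse.mpr
    ⟨ψ, fun x => LinearMap.congr_fun h1 x, fun x => LinearMap.congr_fun h2 x⟩

open TensorProduct MulOpposite in
/-- The tensor product of two Azumaya algebras over a commutative ring `R`
is an Azumaya `R`-algebra. -/
theorem tensorProduct_isAzumaya (R A B : Type*) [CommRing R]
    [Ring A] [Algebra R A] [Ring B] [Algebra R B]
    (hA : IsAzumayaAlgebra R A) (hB : IsAzumayaAlgebra R B) :
    IsAzumayaAlgebra R (A ⊗[R] B) := by
  obtain ⟨hAf, hAp, hAs, hAb⟩ := hA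
  obtain ⟨hBf, hBp, hBs, hBb⟩ := hB
  haveI := hAf; haveI := hAp; haveI := hAs; haveI := hBf; haveI := hBp; haveI := hBs
  refine ⟨inferInstance, inferInstance, ?_, ?_⟩
  · -- FaithfulSMul
    constructor
    intro r s h
    have h1 : algebraMap R (A ⊗[R] B) r = algebraMap R (A ⊗[R] B) s := by
      simpa [Algebra.algebraMap_eq_smul_one] using h 1
    -- reduce to injectivity of algebraMap
    have hinjA : Function.Injective (algebraMap R A) := by
      intro x y hxy
      refine hAs.eq_of_smul_eq_smul (fun a => ?_)
      rw [Algebra.smul_def, Algebra.smul_def, hxy]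
    have hinjB : Function.Injective (algebraMap R B) := by
      intro x y hxy
      refine hBs.eq_of_smul_eq_smul (fun b => ?_)
      rw [Algebra.smul_def, Algebra.smul_def, hxy]
    -- R ⊗ B → A ⊗ B is injective since B is flat and R → A is injective
    have hflat : Module.Flat R B := inferInstance
    have hrT : Function.Injective
        (LinearMap.rTensor B (Algebra.linearMap R A)) :=
      Module.Flat.rTensor_preserves_injective_linearMap _ hinjA
    have h2 : (LinearMap.rTensor B (Algebra.linearMap R A)) (r ⊗ₜ 1)
        = (LinearMap.rTensor B (Algebra.linearMap R A)) (s ⊗ₜ 1) := by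
      simpa [LinearMap.rTensor_tmul, Algebra.TensorProduct.algebraMap_apply] using h1
    have h3 : (r : R) ⊗ₜ[R] (1 : B) = s ⊗ₜ[R] (1 : B) := hrT h2
    have h4 := congrArg (TensorProduct.lid R B) h3
    simp only [TensorProduct.lid_tmul] at h4
    exact hinjB (by simpa [Algebra.algebraMap_eq_smul_one] using h4)
  · -- Bijectivity
    set Φ4 := (Module.endTensorEndAlgHom (R := R) (S := R) (A := R) (M := A) (N := B) :
      Module.End R A ⊗[R] Module.End R B →ₐ[R] Module.End R (A ⊗[R] B)) with hΦ4
    set Φ3 := Algebra.TensorProduct.map (AzumayaHom R A) (AzumayaHom R B) with hΦ3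
    set E := (Algebra.TensorProduct.tensorTensorTensorComm R R R R A Aᵐᵒᵖ B Bᵐᵒᵖ).trans
      (Algebra.TensorProduct.congr AlgEquiv.refl
        (Algebra.TensorProduct.opAlgEquiv R R A B)) with hE
    -- Φ4 is bijective
    have hb4 : Function.Bijective Φ4 := by
      have heq : ⇑Φ4.toLinearMap = ⇑(homTensorHomMap (.id R) A B A B) := by
        have : Φ4.toLinearMap = homTensorHomMap (.id R) A B A B := by
          refine TensorProduct.ext' fun f g => ?_
          simp only [AlgHom.toLinearMap_apply, homTensorHomMap_apply]
          rfl
        rw [this]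
      exact heq ▸ homTensorHomMap_bijective' R A B A B
    -- Φ3 is bijective
    have hb3 : Function.Bijective Φ3 := by
      have heq : Φ3.toLinearMap
          = TensorProduct.map (AzumayaHom R A).toLinearMap (AzumayaHom R B).toLinearMap := by
        refine TensorProduct.ext' fun x y => ?_
        simp [hΦ3]
      have hbmap : Function.Bijective
          ⇑(TensorProduct.map (AzumayaHom R A).toLinearMap (AzumayaHom R B).toLinearMap) := by
        have := (TensorProduct.congr (LinearEquiv.ofBijective (AzumayaHom R A).toLinearMap hAb)
          (LinearEquiv.ofBijective (AzumayaHom R B).toLinearMap hBb)).bijective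
        have hc : ⇑(TensorProduct.congr
            (LinearEquiv.ofBijective (AzumayaHom R A).toLinearMap hAb)
            (LinearEquiv.ofBijective (AzumayaHom R B).toLinearMap hBb))
            = ⇑(TensorProduct.map (AzumayaHom R A).toLinearMap (AzumayaHom R B).toLinearMap) := by
          have : (TensorProduct.congr (LinearEquiv.ofBijective (AzumayaHom R A).toLinearMap hAb)
              (LinearEquiv.ofBijective (AzumayaHom R B).toLinearMap hBb)).toLinearMap
              = TensorProduct.map (AzumayaHom R A).toLinearMap (AzumayaHom R B).toLinearMap := by
            refine TensorProduct.ext' fun x y => ?_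
            simp [TensorProduct.congr_tmul]
            rfl
          funext z
          exact LinearMap.congr_fun this z
        rwa [hc] at this
      have : ⇑Φ3 = ⇑Φ3.toLinearMap := rfl
      rw [this, heq]
      exact hbmap
    -- the commuting square
    have hcomm : (AzumayaHom R (A ⊗[R] B)).toLinearMap.comp (E.toLinearEquiv : _ →ₗ[R] _)
        = (Φ4.comp Φ3).toLinearMap := by
      refine TensorProduct.ext_fourfold' fun a a' b b' => ?_
      have hEapp : E ((a ⊗ₜ[R] a') ⊗ₜ[R] (b ⊗ₜ[R] b'))
          = (a ⊗ₜ[R] b) ⊗ₜ[R] op (unop a' ⊗ₜ[R] unop b') := by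
        simp only [hE, AlgEquiv.trans_apply,
          Algebra.TensorProduct.tensorTensorTensorComm_tmul,
          Algebra.TensorProduct.congr_apply, AlgEquiv.coe_refl,
          Algebra.TensorProduct.map_tmul, AlgHom.coe_id, id_eq]
        rfl
      refine TensorProduct.ext' fun x y => ?_
      simp only [LinearMap.coe_comp, Function.comp_apply, LinearEquiv.coe_coe,
        AlgEquiv.toLinearEquiv_apply, AlgHom.toLinearMap_apply, AlgHom.coe_comp]
      rw [hEapp]
      simp only [hΦ3, hΦ4, Algebra.TensorProduct.map_tmul, Module.endTensorEndAlgHom_apply]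
      simp only [AzumayaHom, Algebra.TensorProduct.lift_tmul, mulRightHom,
        AlgHom.coe_mk, RingHom.coe_mk, MonoidHom.coe_mk, OneHom.coe_mk]
      simp only [Module.End.mul_eq_comp, LinearMap.coe_comp, Function.comp_apply,
        LinearMap.mul_apply', LinearMap.mulRight_apply, unop_op,
        TensorProduct.AlgebraTensorModule.map_tmul, TensorProduct.map_tmul]
      simp [Algebra.TensorProduct.tmul_mul_tmul, mul_assoc]
    have hfun : ⇑(AzumayaHom R (A ⊗[R] B)) ∘ ⇑E = ⇑Φ4 ∘ ⇑Φ3 := by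
      funext x
      exact LinearMap.congr_fun hcomm x
    have : ⇑(AzumayaHom R (A ⊗[R] B)) = (⇑Φ4 ∘ ⇑Φ3) ∘ ⇑E.symm := by
      rw [← hfun]
      funext x
      simp
    rw [this]
    exact (hb4.comp hb3).comp E.symm.bijective
end
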